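/- Let B be an r-regular multigraph whose underlying simple graph is the Petersen graph, in which every odd cut has size at least r. Then the edge–perfect-matching system Ax = 1 for B has a nonnegative solution x whose entries are all integers or all with at most 6 entries equal to exactly 1/2 (and all other nonzero entries positive integers), supported on a linearly independent set of perfect matchings. -/

import Mathlib

open Finset
open scoped Classical

/-- A multigraph: a type of vertices, a type of edges (parallel edges allowed),
and an assignment of an unordered pair of endpoints to each edge. -/
structure Multigraph (V E : Type) where
  ends : E → Sym2 V

namespace Multigraph

variable {V E : Type} [Fintype V] [Fintype E] (G : Multigraph V E)

/-- The edge `e` is incident with the vertex `v`. -/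
def Inc (e : E) (v : V) : Prop := v ∈ G.ends e

/-- The graph has no loops. -/
def Loopless : Prop := ∀ e : E, ¬ (G.ends e).IsDiag

/-- The degree of a vertex: the number of edges incident with it. -/
noncomputable def degree (v : V) : ℕ := (univ.filter fun e => G.Inc e v).card

/-- A perfect matching: a set of edges covering every vertex exactly once. -/
def IsPM (M : Finset E) : Prop := ∀ v : V, (M.filter fun e => G.Inc e v).card = 1

/-- The cut determined by a shore `S`: all edges with exactly one endpoint in `S`. -/
noncomputable def cut (S : Finset V) : Finset E :=
  univ.filter fun e => ∃ u v : V, G.ends e = s(u, v) ∧ u ∈ S ∧ v ∉ S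

/-- `S` is the shore of an odd cut. -/
def IsOddShore (_G : Multigraph V E) (S : Finset V) : Prop := Odd S.card ∧ Odd Sᶜ.card

/-- `S` is the shore of a tight cut: an odd cut meeting every perfect matching
in exactly one edge. -/
def IsTightShore (S : Finset V) : Prop :=
  G.IsOddShore S ∧ ∀ M : Finset E, G.IsPM M → (M ∩ G.cut S).card = 1

/-- The underlying simple graph of a multigraph. -/
def adj : SimpleGraph V := SimpleGraph.fromRel (fun u v => ∃ e : E, G.ends e = s(u, v))

/-- A matching-covered graph: connected, with at least one edge, and every
edge lies in some perfect matching. -/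
def MatchingCovered : Prop :=
  G.adj.Connected ∧ Nonempty E ∧ ∀ e : E, ∃ M : Finset E, G.IsPM M ∧ e ∈ M

/-- `G` is an `r`-graph: `r`-regular, loopless, and every odd cut has at least `r` edges. -/
def IsRGraph (r : ℕ) : Prop :=
  G.Loopless ∧ (∀ v : V, G.degree v = r) ∧
    ∀ S : Finset V, G.IsOddShore S → r ≤ (G.cut S).card

end Multigraph

/-- The vertices of the Petersen graph: 2-element subsets of a 5-element set. -/
abbrev PetersenV := {s : Finset (Fin 5) // s.card = 2}

/-- The Petersen graph, realized as the Kneser graph `K(5,2)`. -/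
def Petersen : SimpleGraph PetersenV where
  Adj a b := Disjoint a.1 b.1 ∧ a ≠ b
  symm := ⟨fun _ _ h => ⟨h.1.symm, Ne.symm h.2⟩⟩
  loopless := ⟨fun _ h => h.2 rfl⟩

/-!
Identify the vertices with those of the Petersen graph `K(5,2)` and let `c(f)` be the number of
parallel edges over a Petersen edge `f`. The Petersen graph has six perfect matchings `Mᵢ`, each the
cut of a five-vertex shore `Tᵢ`, and every edge lies in exactly two of them. Pairing `c` with a
suitable vertex potential, once through the degrees and once edge by edge, shows that the excesses
`αᵢ = |∂Tᵢ| - r ≥ 0` satisfy `α_p + α_q = 4 c(f)` whenever `f ∈ M_p ∩ M_q`. Any two of the `Mᵢ`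
share an edge, so all `αᵢ` are congruent to the same `0` or `2` modulo `4`: `αᵢ = 4 aᵢ + 2 pad`
with `pad ≤ 1`, and `c = ∑ aᵢ Mᵢ + pad · P` where `P` is the edge set of the Petersen graph.

Distributing the parallel copies accordingly splits the edges into `aᵢ` lifts of each `Mᵢ` and `pad`
copies of `P`; as `P = ½ ∑ Mᵢ`, the six lifts of the `Mᵢ` inside a copy of `P` get weight `½`.
Every lift with weight `1` has an edge used by no other matching of the support, and any two lifts
with weight `½` share an edge used by no other one; this gives linear independence.
-/

namespace Multigraph

variable {V W E : Type} (G : Multigraph V E)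

lemma exists_ends_eq (e : E) : ∃ u v, G.ends e = s(u, v) := by
  induction G.ends e using Sym2.ind with
  | h u v => exact ⟨u, v, rfl⟩

lemma exists_ends_eq_adj {H : SimpleGraph V} (hG : ∀ e, G.ends e ∈ H.edgeSet) (e : E) :
    ∃ u v, G.ends e = s(u, v) ∧ H.Adj u v := by
  obtain ⟨u, v, h⟩ := G.exists_ends_eq e
  exact ⟨u, v, h, by simpa [h] using hG e⟩

lemma sum_inc_of_ends_eq [Fintype V] {R : Type} [AddCommMonoid R] {e : E} {u v : V}
    (h : G.ends e = s(u, v)) (huv : u ≠ v) (w : V → R) :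
    ∑ x with G.Inc e x, w x = w u + w v := by
  rw [show univ.filter (G.Inc e) = {u, v} by ext; simp [Inc, h], sum_pair huv]

lemma isPM_of_bijOn {H : SimpleGraph V} (hH : ∀ v, ∃! w, H.Adj v w) {L : Finset E}
    (hL : Set.BijOn G.ends L H.edgeSet) : G.IsPM L := by
  intro v
  obtain ⟨w, hvw, hw⟩ := hH v
  obtain ⟨e, heL, he⟩ := hL.surjOn (show s(v, w) ∈ H.edgeSet from hvw)
  rw [card_eq_one]
  refine ⟨e, eq_singleton_iff_unique_mem.mpr ⟨mem_filter.mpr ⟨heL, by simp [Inc, he]⟩, ?_⟩⟩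
  intro e' he'
  obtain ⟨he'L, hv⟩ := mem_filter.mp he'
  obtain ⟨x, hx⟩ := Sym2.mem_iff_exists.mp hv
  have hvx : H.Adj v x := by simpa [hx] using hL.mapsTo he'L
  exact hL.injOn he'L heL (by rw [he, hx, hw x hvx])

def map (φ : V → W) : Multigraph W E := ⟨fun e => (G.ends e).map φ⟩

lemma ends_map_eq (φ : V → W) {e : E} {u v : V} (h : G.ends e = s(u, v)) :
    (G.map φ).ends e = s(φ u, φ v) := by
  simp [map, h]

lemma inc_map (φ : V ≃ W) {e : E} {v : V} : (G.map φ).Inc e (φ v) ↔ G.Inc e v := by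
  simp [map, Inc, Sym2.mem_map]

lemma isPM_map (φ : V ≃ W) : (G.map φ).IsPM = G.IsPM := by
  funext M
  simp only [IsPM, ← φ.forall_congr_right, inc_map]

lemma ends_map_mem_edgeSet (hl : G.Loopless) {H : SimpleGraph W} (φ : G.adj ≃g H) (e : E) :
    (G.map φ.toEquiv).ends e ∈ H.edgeSet := by
  obtain ⟨u, v, h⟩ := G.exists_ends_eq e
  have huv : u ≠ v := fun huv => hl e (by simp [h, huv])
  have hadj : G.adj.Adj u v := (SimpleGraph.fromRel_adj _ u v).mpr ⟨huv, Or.inl ⟨e, h⟩⟩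
  rw [G.ends_map_eq φ.toEquiv h]
  exact φ.map_adj_iff.mpr hadj

lemma isOddShore_map [Fintype V] [Fintype W] (φ : V ≃ W) {S : Finset W}
    (h : (G.map φ).IsOddShore S) : G.IsOddShore (S.map φ.symm.toEmbedding) := by
  obtain ⟨h1, h2⟩ := h
  refine ⟨by rwa [card_map], ?_⟩
  rwa [card_compl, card_map, Fintype.card_congr φ, ← card_compl]

variable [Fintype E]

def edgeMultiplicity [DecidableEq V] (f : Sym2 V) : ℕ := #{e | G.ends e = f}

lemma degree_map (φ : V ≃ W) (v : V) : (G.map φ).degree (φ v) = G.degree v := by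
  simp only [degree, inc_map]

variable [Fintype V]

lemma mem_cut_of_ends_eq {S : Finset V} {e : E} {u v : V} (h : G.ends e = s(u, v)) :
    e ∈ G.cut S ↔ (u ∈ S ↔ v ∉ S) := by
  simp only [cut, mem_filter, mem_univ, true_and, h, Sym2.eq_iff]
  constructor
  · rintro ⟨x, y, ⟨rfl, rfl⟩ | ⟨rfl, rfl⟩, hx, hy⟩ <;> tauto
  · intro huv
    by_cases hu : u ∈ S
    · exact ⟨u, v, Or.inl ⟨rfl, rfl⟩, hu, huv.1 hu⟩
    · exact ⟨v, u, Or.inr ⟨rfl, rfl⟩, by tauto, hu⟩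

lemma sum_sum_inc_eq_sum_degree_mul {R : Type} [CommSemiring R] (w : V → R) :
    ∑ e, ∑ v with G.Inc e v, w v = ∑ v, G.degree v * w v := by
  simp only [sum_filter]
  rw [sum_comm]
  refine sum_congr rfl fun v _ => ?_
  rw [← sum_filter, sum_const, nsmul_eq_mul, degree]

lemma cut_map [Fintype W] (φ : V ≃ W) (S : Finset W) :
    (G.map φ).cut S = G.cut (S.map φ.symm.toEmbedding) := by
  ext e
  obtain ⟨u, v, h⟩ := G.exists_ends_eq e
  rw [mem_cut_of_ends_eq _ (G.ends_map_eq φ h), mem_cut_of_ends_eq _ h]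
  simp [Finset.mem_map_equiv]

end Multigraph

theorem exists_bijOn_of_card_fiber_eq {α β K : Type} [Fintype α] [Fintype K] [DecidableEq β]
    (p : α → β) (N : K → Set β) (h : ∀ b, #{a | p a = b} = #{k | b ∈ N k}) :
    ∃ layer : α → K, ∀ k, Set.BijOn p {a | layer a = k} (N k) := by
  let F := {x : K × β // x.2 ∈ N x.1}
  let fiberEquiv (b : β) : {k // b ∈ N k} ≃ {x : F // x.1.2 = b} :=
    { toFun := fun k => ⟨⟨(k.1, b), k.2⟩, rfl⟩
      invFun := fun x => ⟨x.1.1.1, by obtain ⟨⟨⟨k, b⟩, hk⟩, rfl⟩ := x; exact hk⟩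
      left_inv := fun _ => rfl
      right_inv := by rintro ⟨⟨⟨k, b⟩, hk⟩, rfl⟩; rfl }
  let ρ : α ≃ F := Equiv.ofFiberEquiv fun b =>
    (Fintype.equivOfCardEq (by simpa only [Fintype.card_subtype] using h b)).trans (fiberEquiv b)
  have hρ (a : α) : (ρ a).1.2 = p a := Equiv.ofFiberEquiv_map (g := fun x : F => x.1.2) _ a
  refine ⟨fun a => (ρ a).1.1, fun k => ⟨?_, ?_, ?_⟩⟩
  · rintro a rfl
    exact hρ a ▸ (ρ a).2
  · rintro a rfl a' ha' hpa
    exact ρ.injective (Subtype.ext (Prod.ext ha'.symm (by rw [hρ, hρ, hpa])))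
  · intro b hb
    refine ⟨ρ.symm ⟨(k, b), hb⟩, by simp, ?_⟩
    rw [← hρ, Equiv.apply_symm_apply]

lemma exists_ne_ne_of_two_lt_card {ι : Type} [Fintype ι] (h : 2 < Fintype.card ι) (i : ι) :
    ∃ j k, j ≠ i ∧ k ≠ i ∧ j ≠ k := by
  obtain ⟨a, b, c, hab, hac, hbc⟩ := Fintype.two_lt_card_iff.mp h
  by_cases hia : i = a
  · exact ⟨b, c, hia ▸ hab.symm, hia ▸ hac.symm, hbc⟩
  by_cases hib : i = b
  · exact ⟨a, c, hib ▸ hab, hib ▸ hbc.symm, hac⟩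
  · exact ⟨a, b, Ne.symm hia, Ne.symm hib, hab⟩

lemma exists_eq_four_mul_add_two_mul {ι : Type} [Fintype ι] (h3 : 2 < Fintype.card ι)
    {α : ι → ℕ} (h : ∀ i j, i ≠ j → 4 ∣ α i + α j) :
    ∃ (a : ι → ℕ) (pad : ℕ), pad ≤ 1 ∧ ∀ i, α i = 4 * a i + 2 * pad := by
  have hmod (i : ι) : α i % 4 = 0 ∨ α i % 4 = 2 := by
    obtain ⟨j, k, hj, hk, hjk⟩ := exists_ne_ne_of_two_lt_card h3 i
    have := h i j hj.symm; have := h i k hk.symm; have := h j k hjk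
    omega
  have hsame (i j : ι) : α i % 4 = α j % 4 := by
    by_cases hij : i = j
    · rw [hij]
    · have := h i j hij; have := hmod i; have := hmod j
      omega
  obtain ⟨i₀⟩ : Nonempty ι := Fintype.card_pos_iff.mp (by omega)
  refine ⟨fun i => α i / 4, α i₀ % 4 / 2, by omega, fun i => ?_⟩
  dsimp only
  have := hsame i i₀; have := hmod i₀
  omega

lemma eq_zero_of_forall_add_eq_zero {ι : Type} [Fintype ι] (h3 : 2 < Fintype.card ι)
    {g : ι → ℝ} (h : ∀ i j, i ≠ j → g i + g j = 0) (i : ι) : g i = 0 := by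
  obtain ⟨j, k, hj, hk, hjk⟩ := exists_ne_ne_of_two_lt_card h3 i
  linarith [h i j hj.symm, h i k hk.symm, h j k hjk]

lemma sum_eq_zero_of_mem_iff {J E : Type} [Fintype J] {m : J → Finset E} {g : J → ℝ}
    (hg : ∑ j, g j • (fun e => if e ∈ m j then (1 : ℝ) else 0) = 0) {e : E} {T : Finset J}
    (hT : ∀ j, e ∈ m j ↔ j ∈ T) : ∑ j ∈ T, g j = 0 := by
  have := congrFun hg e
  simp only [Finset.sum_apply, Pi.smul_apply, smul_eq_mul, mul_ite, mul_one, mul_zero, hT,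
    Pi.zero_apply] at this
  rwa [← sum_filter, filter_mem_eq_inter, univ_inter] at this

instance : DecidableRel Petersen.Adj := fun u v =>
  inferInstanceAs (Decidable (Disjoint u.1 v.1 ∧ u ≠ v))

/-- The six Hamiltonian cycles of `K₅` through the edge `01`. The edge set of each, a set of five
vertices of `K(5,2)`, is a shore whose cut is a perfect matching of the Petersen graph, and the six
cuts are all of its perfect matchings. -/
def petersenPentagon : Fin 6 → Fin 5 → Fin 5 :=
  ![![0, 1, 2, 3, 4], ![0, 1, 2, 4, 3], ![0, 1, 3, 2, 4], ![0, 1, 3, 4, 2], ![0, 1, 4, 2, 3],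
    ![0, 1, 4, 3, 2]]

def petersenShore (i : Fin 6) : Finset PetersenV :=
  {v | ∃ j, v.1 = {petersenPentagon i j, petersenPentagon i (j + 1)}}

def petersenMatching (i : Fin 6) : SimpleGraph PetersenV where
  Adj u v := Petersen.Adj u v ∧ (u ∈ petersenShore i ↔ v ∉ petersenShore i)
  symm := ⟨fun _ _ h => ⟨h.1.symm, by tauto⟩⟩
  loopless := ⟨fun _ h => h.1.2 rfl⟩

instance (i : Fin 6) : DecidableRel (petersenMatching i).Adj := fun u v =>
  inferInstanceAs (Decidable (Petersen.Adj u v ∧ (u ∈ petersenShore i ↔ v ∉ petersenShore i)))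

lemma petersenMatching_le (i : Fin 6) : petersenMatching i ≤ Petersen := fun _ _ h => h.1

lemma card_petersenShore (i : Fin 6) : #(petersenShore i) = 5 := by
  revert i; decide

lemma existsUnique_petersenMatching_adj (i : Fin 6) (u : PetersenV) :
    ∃! v, (petersenMatching i).Adj u v :=
  (Fintype.existsUnique_iff_card_one _).mpr (by revert i u; decide)

lemma card_petersenMatching_adj {u v : PetersenV} (h : Petersen.Adj u v) :
    #{i | (petersenMatching i).Adj u v} = 2 := by
  revert u v; decide

lemma exists_petersenMatching_adj_iff {i j : Fin 6} (hij : i ≠ j) :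
    ∃ u v, Petersen.Adj u v ∧ ∀ k, (petersenMatching k).Adj u v ↔ k = i ∨ k = j := by
  revert i j; decide

/-- As a combination of vertex stars: twice the stars of the four vertices containing the point
`z ∉ a ∪ b`, which together cover every edge once except the three edges inside `Fin 5 \ {z}`
(`ab` among them), minus twice the stars of `a` and `b`. -/
def petersenPotential (a b v : PetersenV) : ℤ :=
  if v = a ∨ v = b then -2 else if v.1 ⊆ a.1 ∪ b.1 then 0 else 2

lemma petersenPotential_add {a b u v : PetersenV} (hab : Petersen.Adj a b)
    (huv : Petersen.Adj u v) :
    petersenPotential a b u + petersenPotential a b v =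
      ∑ i with (petersenMatching i).Adj a b, (if (petersenMatching i).Adj u v then 2 else 0) -
        if s(u, v) = s(a, b) then 8 else 0 := by
  revert a b u v; decide

lemma sum_petersenPotential {a b : PetersenV} (hab : Petersen.Adj a b) :
    ∑ v, petersenPotential a b v = 4 := by
  revert a b; decide

namespace PetersenMultigraph

open Multigraph

/-- Layer `inl ⟨i, t⟩` will carry a copy of `petersenMatching i`, layer `inr t` a copy of the whole
Petersen graph. -/
abbrev LayerIndex (a : Fin 6 → ℕ) (pad : ℕ) := (Σ i, Fin (a i)) ⊕ Fin pad

def layerGraph {a : Fin 6 → ℕ} {pad : ℕ} : LayerIndex a pad → SimpleGraph PetersenV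
  | .inl k => petersenMatching k.1
  | .inr _ => Petersen

lemma card_layerGraph_adj (a : Fin 6 → ℕ) (pad : ℕ) (u v : PetersenV)
    [DecidablePred fun k : LayerIndex a pad => s(u, v) ∈ (layerGraph k).edgeSet] :
    #{k : LayerIndex a pad | s(u, v) ∈ (layerGraph k).edgeSet} =
      ∑ i with (petersenMatching i).Adj u v, a i + if Petersen.Adj u v then pad else 0 := by
  rw [card_filter, Fintype.sum_sum_type, Fintype.sum_sigma]
  simp [layerGraph, sum_ite]

/-- `inr (t, i)` indexes the copy of `petersenMatching i` inside the layer `inr t`. -/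
abbrev MatchingIndex (a : Fin 6 → ℕ) (pad : ℕ) := (Σ i, Fin (a i)) ⊕ (Fin pad × Fin 6)

variable {E : Type} [Fintype E] {a : Fin 6 → ℕ} {pad : ℕ}

def liftedMatching (G : Multigraph PetersenV E) (layer : E → LayerIndex a pad) :
    MatchingIndex a pad → Finset E
  | .inl k => {e | layer e = .inl k}
  | .inr (t, i) => {e | layer e = .inr t ∧ G.ends e ∈ (petersenMatching i).edgeSet}

noncomputable def matchingWeight : MatchingIndex a pad → ℝ
  | .inl _ => 1
  | .inr _ => 1 / 2

lemma matchingWeight_eq_one_or_eq_half (j : MatchingIndex a pad) :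
    matchingWeight j = 1 ∨ matchingWeight j = 1 / 2 := by
  rcases j with _ | _ <;> simp [matchingWeight]

lemma card_matchingWeight_eq_half :
    #{j : MatchingIndex a pad | matchingWeight j = 1 / 2} = 6 * pad := by
  rw [card_filter, Fintype.sum_sum_type]
  simp [matchingWeight, mul_comm]

variable {G : Multigraph PetersenV E}

section

variable (hG : ∀ e, G.ends e ∈ Petersen.edgeSet)
include hG

lemma mem_cut_petersenShore_iff (e : E) (i : Fin 6) :
    e ∈ G.cut (petersenShore i) ↔ G.ends e ∈ (petersenMatching i).edgeSet := by
  obtain ⟨u, v, h, huv⟩ := G.exists_ends_eq_adj hG e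
  rw [G.mem_cut_of_ends_eq h, h, SimpleGraph.mem_edgeSet]
  exact ⟨fun h' => ⟨huv, h'⟩, And.right⟩

theorem sum_card_cut_petersenShore {r : ℕ} (hreg : ∀ v, G.degree v = r) {a b : PetersenV}
    (hab : Petersen.Adj a b) :
    ∑ i with (petersenMatching i).Adj a b, (#(G.cut (petersenShore i)) : ℤ) =
      2 * r + 4 * G.edgeMultiplicity s(a, b) := by
  have hedge (e : E) : ∑ v with G.Inc e v, petersenPotential a b v =
      ∑ i with (petersenMatching i).Adj a b, 2 * (if e ∈ G.cut (petersenShore i) then 1 else 0) -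
        8 * if G.ends e = s(a, b) then 1 else 0 := by
    obtain ⟨u, v, h, huv⟩ := G.exists_ends_eq_adj hG e
    simp only [G.sum_inc_of_ends_eq h huv.ne, petersenPotential_add hab huv,
      mem_cut_petersenShore_iff hG, h, SimpleGraph.mem_edgeSet]
    simp
  have hsum := G.sum_sum_inc_eq_sum_degree_mul (petersenPotential a b)
  simp only [hreg, ← mul_sum, sum_petersenPotential hab, hedge, sum_sub_distrib] at hsum
  rw [sum_comm] at hsum
  simp only [sum_boole, filter_mem_eq_inter, univ_inter] at hsum
  rw [edgeMultiplicity]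
  linarith

theorem exists_edgeMultiplicity_eq_sum {r : ℕ} (hreg : ∀ v, G.degree v = r)
    (hodd : ∀ S, G.IsOddShore S → r ≤ #(G.cut S)) :
    ∃ (a : Fin 6 → ℕ) (pad : ℕ), pad ≤ 1 ∧ ∀ u v, Petersen.Adj u v →
      G.edgeMultiplicity s(u, v) = ∑ i with (petersenMatching i).Adj u v, a i + pad := by
  have hr (i : Fin 6) : r ≤ #(G.cut (petersenShore i)) :=
    hodd _ ⟨by rw [card_petersenShore]; decide,
      by simp only [card_compl, card_petersenShore]; decide⟩
  have hpair (i j : Fin 6) (hij : i ≠ j) :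
      4 ∣ (#(G.cut (petersenShore i)) - r) + (#(G.cut (petersenShore j)) - r) := by
    obtain ⟨u, v, huv, hk⟩ := exists_petersenMatching_adj_iff hij
    have hI : ({k | (petersenMatching k).Adj u v} : Finset (Fin 6)) = {i, j} := by
      ext k; simp [hk]
    have hsum := sum_card_cut_petersenShore hG hreg huv
    rw [hI, sum_pair hij] at hsum
    have := hr i; have := hr j
    exact ⟨G.edgeMultiplicity s(u, v), by omega⟩
  obtain ⟨a, pad, hpad, hα⟩ := exists_eq_four_mul_add_two_mul (by simp) hpair
  refine ⟨a, pad, hpad, fun u v huv => ?_⟩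
  have hcut (i : Fin 6) : (#(G.cut (petersenShore i)) : ℤ) = r + 4 * a i + 2 * pad := by
    have := hα i; have := hr i
    omega
  have hsum := sum_card_cut_petersenShore hG hreg huv
  simp only [hcut, sum_add_distrib, sum_const, card_petersenMatching_adj huv, ← mul_sum,
    nsmul_eq_mul, Nat.cast_ofNat] at hsum
  zify
  linarith

theorem exists_layer_bijOn (hdec : ∀ u v, Petersen.Adj u v →
      G.edgeMultiplicity s(u, v) = ∑ i with (petersenMatching i).Adj u v, a i + pad) :
    ∃ layer : E → LayerIndex a pad, ∀ k,
      Set.BijOn G.ends {e | layer e = k} (layerGraph k).edgeSet := by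
  refine exists_bijOn_of_card_fiber_eq _ _ fun f => ?_
  induction f using Sym2.ind with
  | h u v =>
    rw [card_layerGraph_adj]
    by_cases huv : Petersen.Adj u v
    · rw [if_pos huv, ← hdec u v huv, edgeMultiplicity]
    · have hnot (e : E) : G.ends e ≠ s(u, v) := fun h => huv (by simpa [h] using hG e)
      have hM (i : Fin 6) : ¬(petersenMatching i).Adj u v := fun h => huv h.1
      simp [hnot, huv, hM]

lemma sum_matchingWeight (layer : E → LayerIndex a pad) (e : E) :
    ∑ j, (if e ∈ liftedMatching G layer j then matchingWeight j else 0) = 1 := by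
  obtain ⟨u, v, h, huv⟩ := G.exists_ends_eq_adj hG e
  rw [Fintype.sum_sum_type, Fintype.sum_prod_type]
  rcases hl : layer e with k | t
  · simp [liftedMatching, matchingWeight, hl]
  · simp only [liftedMatching, matchingWeight, hl, h, mem_filter, mem_univ, true_and,
      reduceCtorEq, if_false, sum_const_zero, zero_add, Sum.inr.injEq, ite_and]
    rw [sum_comm]
    simp only [sum_ite_eq, mem_univ, if_true, SimpleGraph.mem_edgeSet]
    rw [← sum_filter, sum_const, card_petersenMatching_adj huv]
    norm_num

end

section

variable {layer : E → LayerIndex a pad}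
  (hlayer : ∀ k, Set.BijOn G.ends {e | layer e = k} (layerGraph k).edgeSet)
include hlayer

lemma isPM_liftedMatching (j : MatchingIndex a pad) : G.IsPM (liftedMatching G layer j) := by
  rcases j with k | ⟨t, i⟩
  · refine G.isPM_of_bijOn (existsUnique_petersenMatching_adj k.1) ?_
    simpa [liftedMatching, layerGraph] using hlayer (.inl k)
  · refine G.isPM_of_bijOn (existsUnique_petersenMatching_adj i) ?_
    have := (hlayer (.inr t)).subset_right (SimpleGraph.edgeSet_mono (petersenMatching_le i))
    convert this using 1
    ext e
    simp [liftedMatching]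

lemma linearIndependent_liftedMatching :
    LinearIndependent ℝ fun j e => if e ∈ liftedMatching G layer j then (1 : ℝ) else 0 := by
  rw [Fintype.linearIndependent_iff]
  intro g hg j
  rcases j with k | ⟨t, p⟩
  · obtain ⟨v, huv, -⟩ := existsUnique_petersenMatching_adj k.1 ⟨{0, 1}, rfl⟩
    obtain ⟨e, (he : layer e = .inl k), -⟩ :=
      (hlayer (.inl k)).surjOn (show s(_, v) ∈ (layerGraph (.inl k)).edgeSet from huv)
    simpa using sum_eq_zero_of_mem_iff hg (e := e) (T := {.inl k}) fun j => by
      rcases j with k' | ⟨t', i⟩ <;> simp [liftedMatching, he, eq_comm]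
  · have hpair (p q : Fin 6) (hpq : p ≠ q) : g (.inr (t, p)) + g (.inr (t, q)) = 0 := by
      obtain ⟨u, v, huv, hk⟩ := exists_petersenMatching_adj_iff hpq
      obtain ⟨e, (he : layer e = .inr t), hends⟩ :=
        (hlayer (.inr t)).surjOn (show s(u, v) ∈ (layerGraph (.inr t)).edgeSet from huv)
      have := sum_eq_zero_of_mem_iff hg (e := e) (T := {.inr (t, p), .inr (t, q)}) fun j => by
        rcases j with k' | ⟨t', i⟩ <;> simp [liftedMatching, he, hends, hk, eq_comm, and_or_left]
      rwa [sum_pair (by simpa using hpq)] at this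
    exact eq_zero_of_forall_add_eq_zero (by simp) (g := fun p => g (.inr (t, p))) hpair p

end

theorem exists_weighted_matchings (hG : ∀ e, G.ends e ∈ Petersen.edgeSet) {r : ℕ}
    (hreg : ∀ v, G.degree v = r) (hodd : ∀ S, G.IsOddShore S → r ≤ #(G.cut S)) :
    ∃ (J : Type) (_ : Fintype J) (m : J → Finset E) (w : J → ℝ), (∀ j, G.IsPM (m j)) ∧
      (∀ e, ∑ j, (if e ∈ m j then w j else 0) = 1) ∧
      (LinearIndependent ℝ fun j e => if e ∈ m j then (1 : ℝ) else 0) ∧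
      (∀ j, w j = 1 ∨ w j = 1 / 2) ∧ #{j | w j = 1 / 2} ≤ 6 := by
  obtain ⟨a, pad, hpad, hdec⟩ := exists_edgeMultiplicity_eq_sum hG hreg hodd
  obtain ⟨layer, hlayer⟩ := exists_layer_bijOn hG hdec
  refine ⟨MatchingIndex a pad, inferInstance, liftedMatching G layer, matchingWeight,
    isPM_liftedMatching hlayer, sum_matchingWeight hG layer,
    linearIndependent_liftedMatching hlayer, matchingWeight_eq_one_or_eq_half, ?_⟩
  rw [card_matchingWeight_eq_half]
  omega

end PetersenMultigraph

namespace Multigraph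

variable {V E : Type} [Fintype E] (G : Multigraph V E)

lemma filter_extend_ne_zero {J : Type} [Fintype J] {m : J → Finset E} {w : J → ℝ}
    (hm : ∀ j, G.IsPM (m j)) (hinj : Function.Injective m) (hw : ∀ j, w j ≠ 0) :
    (univ.filter G.IsPM).filter (fun N => Function.extend m w 0 N ≠ 0) = univ.image m := by
  ext M
  simp only [mem_filter, mem_univ, true_and, mem_image]
  refine ⟨fun ⟨_, hM⟩ => not_not.mp fun h => hM (Function.extend_apply' w _ M h), ?_⟩
  rintro ⟨j, rfl⟩
  exact ⟨hm j, by rw [hinj.extend_apply]; exact hw j⟩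

theorem exists_solution_of_matchings {J : Type} [Fintype J] {m : J → Finset E} {w : J → ℝ}
    (hm : ∀ j, G.IsPM (m j)) (hcov : ∀ e, ∑ j, (if e ∈ m j then w j else 0) = 1)
    (hli : LinearIndependent ℝ fun j e => if e ∈ m j then (1 : ℝ) else 0)
    (hw : ∀ j, w j = 1 ∨ w j = 1 / 2) (hhalf : #{j | w j = 1 / 2} ≤ 6) :
    ∃ x : Finset E → ℝ,
      (∀ e : E, ∑ M ∈ univ.filter G.IsPM, (if e ∈ M then x M else 0) = 1) ∧
      (∀ M, 0 ≤ x M) ∧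
      LinearIndependent ℝ
        (fun M : {M : Finset E // M ∈ (univ.filter G.IsPM).filter fun N => x N ≠ 0} =>
          (fun e : E => if e ∈ M.1 then (1 : ℝ) else 0)) ∧
      ((∀ M ∈ (univ.filter G.IsPM).filter fun N => x N ≠ 0,
          ∃ k : ℕ, 0 < k ∧ x M = (k : ℝ)) ∨
        ((((univ.filter G.IsPM).filter fun N => x N = 1/2).card ≤ 6) ∧
          ∀ M ∈ (univ.filter G.IsPM).filter fun N => x N ≠ 0,
            x M ≠ 1/2 → ∃ k : ℕ, 0 < k ∧ x M = (k : ℝ))) := by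
  have hinj : Function.Injective m :=
    Function.Injective.of_comp (f := fun M e => if e ∈ M then (1 : ℝ) else 0) hli.injective
  have hw0 (j : J) : 0 < w j := by rcases hw j with h | h <;> rw [h] <;> norm_num
  have hsupp := G.filter_extend_ne_zero hm hinj fun j => (hw0 j).ne'
  set x := Function.extend m w (0 : Finset E → ℝ)
  have hx (j : J) : x (m j) = w j := hinj.extend_apply w 0 j
  have hx_nonneg (M : Finset E) : 0 ≤ x M := by
    by_cases h : ∃ j, m j = M
    · obtain ⟨j, rfl⟩ := h
      exact (hx j).symm ▸ (hw0 j).le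
    · exact (Function.extend_apply' w (0 : Finset E → ℝ) M h).ge
  refine ⟨x, fun e => ?_, hx_nonneg, ?_, Or.inr ⟨?_, ?_⟩⟩
  · have hzero (M : Finset E) (hPM : M ∈ univ.filter G.IsPM)
        (hM : M ∉ (univ.filter G.IsPM).filter fun N => x N ≠ 0) :
        (if e ∈ M then x M else 0) = 0 := by
      simp only [mem_filter, hPM, true_and, not_not] at hM
      simp [hM]
    rw [← sum_subset (filter_subset _ _) hzero, hsupp, sum_image fun _ _ _ _ h => hinj h,
      ← hcov e]
    simp only [hx]
  · rw [hsupp]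
    show LinearIndepOn ℝ (fun M e => if e ∈ M then (1 : ℝ) else 0)
      ((univ.image m : Finset (Finset E)) : Set (Finset E))
    rw [coe_image, coe_univ, Set.image_univ]
    exact (linearIndepOn_range_iff hinj _).mpr hli
  · refine (card_le_card fun M hM => ?_).trans
      ((card_image_le (s := {j | w j = 1 / 2}) (f := m)).trans hhalf)
    obtain ⟨hPM, hM2⟩ := mem_filter.mp hM
    have : M ∈ univ.image m := hsupp ▸ mem_filter.mpr ⟨hPM, by rw [hM2]; norm_num⟩
    obtain ⟨j, -, rfl⟩ := mem_image.mp this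
    exact mem_image.mpr ⟨j, mem_filter.mpr ⟨mem_univ _, hx j ▸ hM2⟩, rfl⟩
  · intro M hM hM2
    rw [hsupp, mem_image] at hM
    obtain ⟨j, -, rfl⟩ := hM
    refine ⟨1, one_pos, ?_⟩
    rw [hx] at hM2 ⊢
    rw [(hw j).resolve_right hM2, Nat.cast_one]

end Multigraph

open Multigraph in
/-- if `B` is an `r`-regular multigraph whose underlying simple
graph is the Petersen graph and every odd cut has at least `r` edges, then the
system `Ax = 1` has a nonnegative solution supported on linearly independent
perfect matchings whose entries are all integers, or else have at most `6`
entries equal to `1/2` and all other nonzero entries positive integers. -/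
theorem petersen_brick_solution {V E : Type} [Fintype V] [Fintype E]
    (G : Multigraph V E) (hl : G.Loopless)
    (hpet : Nonempty (G.adj ≃g Petersen))
    (r : ℕ) (hreg : ∀ v : V, G.degree v = r)
    (hodd : ∀ S : Finset V, G.IsOddShore S → r ≤ (G.cut S).card) :
    ∃ x : Finset E → ℝ,
      (∀ e : E, ∑ M ∈ univ.filter G.IsPM, (if e ∈ M then x M else 0) = 1) ∧
      (∀ M, 0 ≤ x M) ∧
      LinearIndependent ℝ
        (fun M : {M : Finset E // M ∈ (univ.filter G.IsPM).filter fun N => x N ≠ 0} =>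
          (fun e : E => if e ∈ M.1 then (1 : ℝ) else 0)) ∧
      ((∀ M ∈ (univ.filter G.IsPM).filter fun N => x N ≠ 0,
          ∃ k : ℕ, 0 < k ∧ x M = (k : ℝ)) ∨
        ((((univ.filter G.IsPM).filter fun N => x N = 1/2).card ≤ 6) ∧
          ∀ M ∈ (univ.filter G.IsPM).filter fun N => x N ≠ 0,
            x M ≠ 1/2 → ∃ k : ℕ, 0 < k ∧ x M = (k : ℝ))) := by
  obtain ⟨φ⟩ := hpet
  have hreg' (v : PetersenV) : (G.map φ.toEquiv).degree v = r := by
    rw [← φ.toEquiv.apply_symm_apply v, degree_map, hreg]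
  have hodd' (S : Finset PetersenV) (hS : (G.map φ.toEquiv).IsOddShore S) :
      r ≤ #((G.map φ.toEquiv).cut S) := by
    rw [cut_map]
    exact hodd _ (G.isOddShore_map _ hS)
  obtain ⟨J, _, m, w, hm, hcov, hli, hw, hhalf⟩ :=
    PetersenMultigraph.exists_weighted_matchings (G.ends_map_mem_edgeSet hl φ) hreg' hodd'
  rw [isPM_map] at hm
  exact G.exists_solution_of_matchings hm hcov hli hw hhalf
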